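/- Let F be a field, N ⊴ G groups, and let R : N → GL(W) be an irreducible representation over F such that End_{FN}(W) = F and R extends to a representation S : G → GL(W). Then: (a) every irreducible FG-module lying over W is isomorphic to U ⊗_F W for some irreducible FG-module U acted upon trivially by N (where G acts on U ⊗_F W via g(u⊗w) = gu ⊗ S(g)w); (b) if U is an irreducible FG-module with trivial N-action, then U ⊗_F W is an irreducible FG-module; (c) if U₁, U₂ are irreducible FG-modules with trivial N-action and U₁ ⊗_F W ≅ U₂ ⊗_F W as FG-modules, then U₁ ≅ U₂ as FG-modules. -/

import Mathlib

/-!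
The engine is the Jacobson density theorem: as `W` is irreducible with `End_{FN}(W) = F`, the
image of `F[N]` is dense in `End_F(W)`. Hence, for a vector space `U` and `N` acting on `U ⊗ W`
through `W` alone, every nonzero `N`-submodule of `U ⊗ W` contains `u ⊗ W` for some `u ≠ 0`, and
every `N`-map `U ⊗ W → U' ⊗ W` is `θ ⊗ 1`. The first fact gives (b), since the `u` with
`u ⊗ W ⊆ P` form a `G`-submodule of `U`; it also makes evaluation `Hom_{FN}(W, V) ⊗ W → V`
injective, which yields (a) with `U = Hom_{FN}(W, V)`. The second fact gives (c).
-/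

open scoped TensorProduct DirectSum

section Preliminaries

variable (F : Type*) [Field F]

/-- Isomorphism (equivalence) of representations: an `F`-linear equivalence intertwining
the two actions. -/
def RepIso {G : Type*} [Monoid G] {V V' : Type*} [AddCommMonoid V] [Module F V]
    [AddCommMonoid V'] [Module F V'] (ρ : Representation F G V) (τ : Representation F G V') :
    Prop :=
  ∃ e : V ≃ₗ[F] V', ∀ (g : G) (v : V), e (ρ g v) = τ g (e v)

/-- Irreducibility of a representation: the space is nonzero and admits no invariant
subspaces other than `⊥` and `⊤`. -/
def IsIrreducibleRep {G : Type*} [Monoid G] {V : Type*} [AddCommMonoid V] [Module F V]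
    (ρ : Representation F G V) : Prop :=
  Nontrivial V ∧ ∀ p : Submodule F V, (∀ g : G, ∀ v ∈ p, ρ g v ∈ p) → p = ⊥ ∨ p = ⊤

/-- The subrepresentation on an invariant submodule. -/
def subRep {G : Type*} [Monoid G] {V : Type*} [AddCommMonoid V] [Module F V]
    (ρ : Representation F G V) (p : Submodule F V) (hp : ∀ g : G, ∀ v ∈ p, ρ g v ∈ p) :
    Representation F G ↥p where
  toFun g := (ρ g).restrict (fun v hv => hp g v hv)
  map_one' := by ext v; simp [LinearMap.restrict_apply]
  map_mul' g₁ g₂ := by ext v; simp [LinearMap.restrict_apply]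

/-- A representation is completely reducible if the underlying module is the sum of its
irreducible invariant submodules. -/
def IsCompletelyReducibleRep {G : Type*} [Monoid G] {V : Type*} [AddCommMonoid V]
    [Module F V] (ρ : Representation F G V) : Prop :=
  sSup {q : Submodule F V |
    ∃ hq : ∀ g : G, ∀ v ∈ q, ρ g v ∈ q, IsIrreducibleRep F (subRep F ρ q hq)} = ⊤

/-- The homogeneous component determined by `σ`: the sum of all irreducible invariant
submodules whose subrepresentation is isomorphic to `σ`. -/
noncomputable def homComponent {G : Type*} [Monoid G] {V W : Type*} [AddCommMonoid V]
    [Module F V] [AddCommMonoid W] [Module F W] (ρ : Representation F G V)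
    (σ : Representation F G W) : Submodule F V :=
  sSup {q : Submodule F V |
    ∃ hq : ∀ g : G, ∀ v ∈ q, ρ g v ∈ q,
      IsIrreducibleRep F (subRep F ρ q hq) ∧ RepIso F (subRep F ρ q hq) σ}

/-- The set of all homogeneous components of a representation. -/
noncomputable def homComponents {G : Type*} [Monoid G] {V : Type*} [AddCommMonoid V]
    [Module F V] (ρ : Representation F G V) : Set (Submodule F V) :=
  {S | ∃ (q : Submodule F V) (hq : ∀ g : G, ∀ v ∈ q, ρ g v ∈ q),
      IsIrreducibleRep F (subRep F ρ q hq) ∧ S = homComponent F ρ (subRep F ρ q hq)}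

/-- A representation `ρ` lies over `σ` if it admits an invariant submodule whose
subrepresentation is isomorphic to `σ`. -/
def LiesOver {G : Type*} [Monoid G] {V W : Type*} [AddCommMonoid V] [Module F V]
    [AddCommMonoid W] [Module F W] (ρ : Representation F G V) (σ : Representation F G W) :
    Prop :=
  ∃ (q : Submodule F V) (hq : ∀ g : G, ∀ v ∈ q, ρ g v ∈ q),
    RepIso F (subRep F ρ q hq) σ

/-- The stabilizer in `G` of a subspace of a representation space. -/
def stabSubgroup {G : Type*} [Group G] {V : Type*} [AddCommGroup V] [Module F V]
    (ρ : Representation F G V) (S : Submodule F V) : Subgroup G where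
  carrier := {g : G | S.map (ρ g) = S}
  one_mem' := by
    show S.map (ρ 1) = S
    rw [map_one, Module.End.one_eq_id]
    exact Submodule.map_id S
  mul_mem' := by
    intro a b ha hb
    show S.map (ρ (a * b)) = S
    rw [map_mul, Module.End.mul_eq_comp, Submodule.map_comp, hb, ha]
  inv_mem' := by
    intro a ha
    show S.map (ρ a⁻¹) = S
    conv_lhs => rw [← ha]
    rw [← Submodule.map_comp, ← Module.End.mul_eq_comp, ← map_mul, inv_mul_cancel, map_one,
      Module.End.one_eq_id, Submodule.map_id]

theorem stabSubgroup_mapsTo {G : Type*} [Group G] {V : Type*} [AddCommGroup V] [Module F V]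
    (ρ : Representation F G V) (S : Submodule F V) :
    ∀ g : ↥(stabSubgroup F ρ S), ∀ v ∈ S, ρ (g : G) v ∈ S := by
  intro g v hv
  have hg : S.map (ρ (g : G)) = S := g.2
  have := Submodule.mem_map_of_mem (f := ρ (g : G)) hv
  rwa [hg] at this

/-- Outer tensor product of representations of two groups. -/
noncomputable def outerRep {G₁ G₂ : Type*} [Monoid G₁] [Monoid G₂] {V₁ V₂ : Type*}
    [AddCommMonoid V₁] [Module F V₁] [AddCommMonoid V₂] [Module F V₂]
    (ρ₁ : Representation F G₁ V₁) (ρ₂ : Representation F G₂ V₂) :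
    Representation F (G₁ × G₂) (V₁ ⊗[F] V₂) :=
  Representation.tprod (ρ₁.comp (MonoidHom.fst G₁ G₂)) (ρ₂.comp (MonoidHom.snd G₁ G₂))

/-- A projective representation with factor set `α`. -/
def IsProjRep {G : Type*} [Group G] {W : Type*} [AddCommGroup W] [Module F W]
    (X : G → (W →ₗ[F] W)) (α : G → G → Fˣ) : Prop :=
  (∀ g : G, Function.Bijective (X g)) ∧
    ∀ g₁ g₂ : G, (X g₁) ∘ₗ (X g₂) = ((α g₁ g₂ : F)) • X (g₁ * g₂)

/-- Irreducibility of a projective representation: no proper nonzero invariant subspace. -/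
def IsProjIrred {G : Type*} [Group G] {W : Type*} [AddCommGroup W] [Module F W]
    (X : G → (W →ₗ[F] W)) : Prop :=
  Nontrivial W ∧ ∀ p : Submodule F W, (∀ g : G, ∀ w ∈ p, X g w ∈ p) → p = ⊥ ∨ p = ⊤

/-- `D` is a system of representatives for the `(H₁,H₂)`-double cosets in `G`. -/
def IsDCosetReps {G : Type*} [Group G] (H₁ H₂ : Subgroup G) (D : Set G) : Prop :=
  ∀ g : G, ∃! d : G, d ∈ D ∧ ∃ h₁ ∈ H₁, ∃ h₂ ∈ H₂, g = h₁ * d * h₂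

end Preliminaries

section Induction

variable (F : Type*) [Field F] {G : Type*} [Group G] (H : Subgroup G)
variable {W : Type*} [AddCommGroup W] [Module F W] (σ : Representation F ↥H W)

/-- The submodule of relations defining the induced module `FG ⊗_{FH} W` as a quotient
of `FG ⊗_F W`. -/
noncomputable def indRel : Submodule (MonoidAlgebra F G) (MonoidAlgebra F G ⊗[F] W) :=
  Submodule.span (MonoidAlgebra F G)
    {z | ∃ (x : H) (w : W),
      z = (MonoidAlgebra.single (x : G) (1 : F)) ⊗ₜ[F] w
            - (1 : MonoidAlgebra F G) ⊗ₜ[F] (σ x w)}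

/-- The underlying space of the induced module `ind_H^G W = FG ⊗_{FH} W`. -/
noncomputable def IndCar := (MonoidAlgebra F G ⊗[F] W) ⧸ indRel F H σ

noncomputable instance : AddCommGroup (IndCar F H σ) :=
  inferInstanceAs (AddCommGroup ((MonoidAlgebra F G ⊗[F] W) ⧸ indRel F H σ))

noncomputable instance : Module (MonoidAlgebra F G) (IndCar F H σ) :=
  inferInstanceAs (Module (MonoidAlgebra F G) ((MonoidAlgebra F G ⊗[F] W) ⧸ indRel F H σ))

noncomputable instance : Module F (IndCar F H σ) :=
  inferInstanceAs (Module F ((MonoidAlgebra F G ⊗[F] W) ⧸ indRel F H σ))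

noncomputable instance : IsScalarTower F (MonoidAlgebra F G) (IndCar F H σ) :=
  inferInstanceAs (IsScalarTower F (MonoidAlgebra F G)
    ((MonoidAlgebra F G ⊗[F] W) ⧸ indRel F H σ))

/-- The induced representation of `G` on `ind_H^G W = FG ⊗_{FH} W`. -/
noncomputable def IndRep : Representation F G (IndCar F H σ) where
  toFun g :=
    { toFun := fun v => (MonoidAlgebra.single g (1 : F) : MonoidAlgebra F G) • v
      map_add' := fun a b => smul_add _ a b
      map_smul' := fun c v => smul_comm _ c v }
  map_one' := by
    ext v
    show MonoidAlgebra.single (1 : G) (1 : F) • v = v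
    rw [← MonoidAlgebra.one_def, one_smul]
  map_mul' g₁ g₂ := by
    ext v
    show MonoidAlgebra.single (g₁ * g₂) (1 : F) • v = _
    rw [show (MonoidAlgebra.single (g₁ * g₂) (1 : F) : MonoidAlgebra F G)
          = MonoidAlgebra.single g₁ 1 * MonoidAlgebra.single g₂ 1 by
        rw [MonoidAlgebra.single_mul_single, one_mul], mul_smul]
    rfl

end Induction

section DirectSums

variable (F : Type*) [Field F] {G : Type*} [Monoid G]

/-- The direct sum of a family of representations. -/
noncomputable def dsumRep {ι : Type*} {V : ι → Type*} [∀ i, AddCommGroup (V i)]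
    [∀ i, Module F (V i)] (ρ : ∀ i, Representation F G (V i)) :
    Representation F G (⨁ i, V i) where
  toFun g := DFinsupp.mapRange.linearMap (fun i => ρ i g)
  map_one' := by
    simp only [map_one]
    exact DFinsupp.mapRange.linearMap_id
  map_mul' g₁ g₂ := by
    simp only [map_mul, Module.End.mul_eq_comp]
    exact DFinsupp.mapRange.linearMap_comp (fun i => ρ i g₁) (fun i => ρ i g₂)

end DirectSums

section Conjugation

variable {G : Type*} [Group G]

/-- Conjugation `x ↦ g x g⁻¹` as a monoid homomorphism of a normal subgroup. -/
def conjHom {N : Subgroup G} (hN : N.Normal) (g : G) : ↥N →* ↥N where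
  toFun x := ⟨g * (x : G) * g⁻¹, hN.conj_mem x.1 x.2 g⟩
  map_one' := by ext; simp
  map_mul' x y := by ext; simp [mul_assoc]

/-- The conjugate subgroup `xHx⁻¹`. -/
def conjSubgroup (x : G) (H : Subgroup G) : Subgroup G :=
  H.map (MulAut.conj x).toMonoidHom

/-- Conjugating back: the homomorphism `K → H`, `k ↦ x⁻¹ k x`, for `K ≤ xHx⁻¹`. -/
def unconjHom (x : G) (H : Subgroup G) {K : Subgroup G} (hK : K ≤ conjSubgroup x H) :
    ↥K →* ↥H where
  toFun k := ⟨x⁻¹ * (k : G) * x, by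
    obtain ⟨h, hh, e⟩ := hK k.2
    have : x⁻¹ * (k : G) * x = h := by
      rw [← e]; simp [MulAut.conj_apply, mul_assoc]
    rw [this]; exact hh⟩
  map_one' := by ext; simp
  map_mul' a b := by
    ext
    show x⁻¹ * (↑a * ↑b) * x = (x⁻¹ * ↑a * x) * (x⁻¹ * ↑b * x)
    group

/-- The homomorphism `K ∩ xHx⁻¹ → H` (with the source regarded as a subgroup of `K`),
given by `k ↦ x⁻¹ k x`. -/
def mackeyHom (x : G) (H K : Subgroup G) :
    ↥((K ⊓ conjSubgroup x H).subgroupOf K) →* ↥H where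
  toFun l := ⟨x⁻¹ * ((l : ↥K) : G) * x, by
    have h2 : ((l : ↥K) : G) ∈ K ⊓ conjSubgroup x H := l.2
    obtain ⟨h, hh, e⟩ := h2.2
    have : x⁻¹ * ((l : ↥K) : G) * x = h := by
      rw [← e]; simp [MulAut.conj_apply, mul_assoc]
    rw [this]; exact hh⟩
  map_one' := by ext; simp
  map_mul' a b := by
    ext
    show x⁻¹ * (↑↑a * ↑↑b) * x = (x⁻¹ * ↑↑a * x) * (x⁻¹ * ↑↑b * x)
    group

end Conjugation

section TensorProduct

variable {F : Type*} [Field F] {U U' W : Type*} [AddCommGroup U] [Module F U]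
  [AddCommGroup U'] [Module F U'] [AddCommGroup W] [Module F W]

theorem TensorProduct.tmul_left_injective {w : W} (hw : w ≠ 0) :
    Function.Injective fun u : U => u ⊗ₜ[F] w := by
  obtain ⟨f, hf⟩ := Module.Projective.exists_dual_eq_one F hw
  refine Function.LeftInverse.injective (g := TensorProduct.rid F U ∘ₗ f.lTensor U) fun u => ?_
  simp [hf]

theorem LinearMap.rTensor_left_injective [Nontrivial W] :
    Function.Injective fun θ : U →ₗ[F] U' => θ.rTensor W := by
  obtain ⟨w, hw⟩ := exists_ne (0 : W)
  intro θ θ' h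
  ext u
  exact TensorProduct.tmul_left_injective hw (by simpa using congr($h (u ⊗ₜ w)))

end TensorProduct

section Density

variable {F : Type*} [Field F] {M : Type*} [Monoid M] {U W : Type*} [AddCommGroup U]
  [Module F U] [AddCommGroup W] [Module F W]

def HasScalarEndomorphisms (σ : Representation F M W) : Prop :=
  ∀ f : W →ₗ[F] W, (∀ (m : M) (w : W), f (σ m w) = σ m (f w)) → ∃ c : F, ∀ w : W, f w = c • w

theorem IsIrreducibleRep.isIrreducible {σ : Representation F M W}
    (hσ : IsIrreducibleRep F σ) : σ.IsIrreducible where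
  exists_pair_ne := by
    obtain ⟨w, hw⟩ := @exists_ne _ hσ.1 (0 : W)
    exact ⟨⊥, ⊤, fun h => hw (show w ∈ (⊥ : Subrepresentation σ) from h ▸ trivial)⟩
  eq_bot_or_eq_top ρ' := (hσ.2 ρ'.toSubmodule ρ'.apply_mem_toSubmodule).imp
    (fun h => Subrepresentation.toSubmodule_injective h)
    (fun h => Subrepresentation.toSubmodule_injective h)

variable {σ : Representation F M W}

/-- The Jacobson density theorem: the image of `F[M]` in `End_F(W)` is dense. -/
theorem exists_asAlgebraHom_eqOn (hσ : IsIrreducibleRep F σ) (hEnd : HasScalarEndomorphisms σ)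
    (f : W →ₗ[F] W) (s : Finset W) :
    ∃ r : MonoidAlgebra F M, ∀ w ∈ s, σ.asAlgebraHom r w = f w := by
  have := hσ.isIrreducible
  let f' : Module.End (Module.End (MonoidAlgebra F M) σ.asModule) σ.asModule :=
    { toFun := σ.asModuleEquiv.symm ∘ f ∘ σ.asModuleEquiv
      map_add' := by simp
      map_smul' := fun φ w => by
        obtain ⟨c, hc⟩ := hEnd
          (σ.asModuleEquiv.toLinearMap ∘ₗ φ.restrictScalars F ∘ₗ σ.asModuleEquiv.symm.toLinearMap)
          fun m w => by
            simp only [LinearMap.comp_apply, LinearEquiv.coe_coe, LinearMap.restrictScalars_apply]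
            rw [Representation.asModuleEquiv_symm_map_rho, map_smul,
              Representation.asModuleEquiv_map_smul, Representation.asAlgebraHom_of]
        have hφ : ∀ v, φ v = σ.asModuleEquiv.symm (c • σ.asModuleEquiv v) := fun v => by
          simpa using congrArg σ.asModuleEquiv.symm (hc (σ.asModuleEquiv v))
        simp [hφ] }
  obtain ⟨r, hr⟩ := jacobson_density f' (s.map σ.asModuleEquiv.symm.toEquiv.toEmbedding)
  exact ⟨r, fun w hw => (hr (σ.asModuleEquiv.symm w) (by simpa using hw)).symm⟩

theorem lTensor_asAlgebraHom_mem {p : Submodule F (U ⊗[F] W)}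
    (hp : ∀ m : M, ∀ z ∈ p, (σ m).lTensor U z ∈ p) (r : MonoidAlgebra F M) :
    ∀ z ∈ p, (σ.asAlgebraHom r).lTensor U z ∈ p := by
  induction r using MonoidAlgebra.induction_linear with
  | zero => simp
  | add r s hr hs =>
    intro z hz
    rw [map_add, LinearMap.lTensor_add]
    exact add_mem (hr z hz) (hs z hz)
  | single m c =>
    intro z hz
    rw [Representation.asAlgebraHom_single, LinearMap.lTensor_smul]
    exact p.smul_mem c (hp m z hz)

theorem exists_ne_zero_forall_tmul_mem (hσ : IsIrreducibleRep F σ)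
    (hEnd : HasScalarEndomorphisms σ) {p : Submodule F (U ⊗[F] W)}
    (hp : ∀ m : M, ∀ z ∈ p, (σ m).lTensor U z ∈ p) (hp₀ : p ≠ ⊥) :
    ∃ u : U, u ≠ 0 ∧ ∀ w : W, u ⊗ₜ[F] w ∈ p := by
  classical
  obtain ⟨z, hz, hz₀⟩ := Submodule.exists_mem_ne_zero_of_ne_bot hp₀
  let b := Module.Basis.ofVectorSpace F W
  obtain ⟨c, rfl⟩ := TensorProduct.eq_repr_basis_right b z
  obtain ⟨j, hj⟩ : ∃ j, c j ≠ 0 := by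
    by_contra! h
    exact hz₀ (by simp [show c = 0 from Finsupp.ext h])
  refine ⟨c j, hj, fun w => ?_⟩
  obtain ⟨r, hr⟩ := exists_asAlgebraHom_eqOn hσ hEnd (b.constr F (Pi.single j w))
    (c.support.image b)
  convert lTensor_asAlgebraHom_mem hp r _ hz using 1
  rw [Finsupp.sum, map_sum, Finset.sum_eq_single j]
  · rw [LinearMap.lTensor_tmul, hr _ (Finset.mem_image_of_mem b (Finsupp.mem_support_iff.2 hj)),
      b.constr_basis, Pi.single_eq_same]
  · intro i hi hij
    rw [LinearMap.lTensor_tmul, hr _ (Finset.mem_image_of_mem b hi), b.constr_basis,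
      Pi.single_eq_of_ne hij, TensorProduct.tmul_zero]
  · intro hj'
    exact absurd (Finsupp.mem_support_iff.2 hj) hj'

end Density

section Intertwining

variable {F : Type*} [Field F] {M : Type*} [Monoid M] {U U' V W : Type*} [AddCommGroup U]
  [Module F U] [AddCommGroup U'] [Module F U'] [AddCommGroup V] [Module F V]
  [AddCommGroup W] [Module F W] {σ : Representation F M W}

/-- In a basis of `U`, each coordinate of `ψ` is an endomorphism of `W` commuting with `σ`,
hence a scalar. -/
theorem exists_eq_tmul_of_intertwining [Nontrivial W] (hEnd : HasScalarEndomorphisms σ)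
    (ψ : W →ₗ[F] U ⊗[F] W) (hψ : ∀ (m : M) (w : W), ψ (σ m w) = (σ m).lTensor U (ψ w)) :
    ∃ u : U, ∀ w : W, ψ w = u ⊗ₜ[F] w := by
  classical
  obtain ⟨w₀, hw₀⟩ := exists_ne (0 : W)
  let b := Module.Basis.ofVectorSpace F U
  let E : U ⊗[F] W ≃ₗ[F] _ := TensorProduct.equivFinsuppOfBasisLeft b
  have hcoord : ∀ i, ∃ c : F, ∀ w, E (ψ w) i = c • w := fun i => by
    simp_rw [E, TensorProduct.equivFinsuppOfBasisLeft_apply]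
    exact hEnd ((TensorProduct.lid F W).toLinearMap ∘ₗ (b.coord i).rTensor W ∘ₗ ψ) fun m w => by
      simp only [LinearMap.comp_apply, hψ]
      induction ψ w using TensorProduct.induction_on with
      | zero => simp
      | tmul u w => simp
      | add x y hx hy => simp only [map_add, hx, hy]
  choose c hc using hcoord
  have hc_supp : ∀ i, c i ≠ 0 → i ∈ (E (ψ w₀)).support := fun i hi => by
    rw [Finsupp.mem_support_iff, hc i w₀]
    exact smul_ne_zero hi hw₀
  refine ⟨b.repr.symm (Finsupp.onFinset _ c hc_supp), fun w => E.injective ?_⟩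
  ext i
  rw [hc i w]
  simp [E]

theorem exists_eq_rTensor_of_intertwining [Nontrivial W] (hEnd : HasScalarEndomorphisms σ)
    (e : U ⊗[F] W →ₗ[F] U' ⊗[F] W)
    (he : ∀ (m : M) (z : U ⊗[F] W), e ((σ m).lTensor U z) = (σ m).lTensor U' (e z)) :
    ∃ θ : U →ₗ[F] U', e = θ.rTensor W := by
  choose θ hθ using fun u => exists_eq_tmul_of_intertwining hEnd (e ∘ₗ TensorProduct.mk F U W u)
    fun m w => by simpa using he m (u ⊗ₜ w)
  obtain ⟨w₀, hw₀⟩ := exists_ne (0 : W)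
  have hθ_tmul : ∀ u, e (u ⊗ₜ w₀) = θ u ⊗ₜ w₀ := fun u => hθ u w₀
  let θ' : U →ₗ[F] U' :=
    { toFun := θ
      map_add' := fun x y => TensorProduct.tmul_left_injective (F := F) hw₀ <| by
        simp only [TensorProduct.add_tmul, ← hθ_tmul, map_add]
      map_smul' := fun c x => TensorProduct.tmul_left_injective (F := F) hw₀ <| by
        simp only [← TensorProduct.smul_tmul', ← hθ_tmul, map_smul, RingHom.id_apply] }
  exact ⟨θ', TensorProduct.ext' fun u w => hθ u w⟩

/-- The kernel is an `M`-submodule of `U ⊗ W`, so if nonzero it would contain some `φ ⊗ W`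
with `φ ≠ 0`. -/
theorem injective_lift_subtype_of_intertwining (hσ : IsIrreducibleRep F σ)
    (hEnd : HasScalarEndomorphisms σ) {τ : Representation F M V} {U : Submodule F (W →ₗ[F] V)}
    (hU : ∀ φ ∈ U, ∀ (m : M) (w : W), φ (σ m w) = τ m (φ w)) :
    Function.Injective (TensorProduct.lift U.subtype) := by
  have hev : ∀ (m : M) (z : U ⊗[F] W),
      TensorProduct.lift U.subtype ((σ m).lTensor U z) = τ m (TensorProduct.lift U.subtype z) := by
    intro m z
    induction z using TensorProduct.induction_on with
    | zero => simp
    | tmul φ w => simpa using hU φ φ.2 m w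
    | add x y hx hy => simp only [map_add, hx, hy]
  refine (injective_iff_map_eq_zero _).2 fun z hz => ?_
  by_contra hz₀
  obtain ⟨φ, hφ, hφ_ker⟩ := exists_ne_zero_forall_tmul_mem hσ hEnd
    (p := LinearMap.ker (TensorProduct.lift U.subtype))
    (fun m z hz => by rw [LinearMap.mem_ker, hev, LinearMap.mem_ker.1 hz, map_zero])
    ((Submodule.ne_bot_iff _).2 ⟨z, hz, hz₀⟩)
  exact hφ (Subtype.ext (LinearMap.ext fun w => by simpa using hφ_ker w))

end Intertwining

section Irreducible

variable {F : Type*} [Field F] {G : Type*} [Monoid G] {U V V' W : Type*} [AddCommGroup U]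
  [Module F U] [AddCommGroup V] [Module F V] [AddCommGroup V'] [Module F V'] [AddCommGroup W]
  [Module F W]

theorem RepIso.symm {V V' : Type*} [AddCommMonoid V] [Module F V] [AddCommMonoid V'] [Module F V']
    {ρ : Representation F G V} {τ : Representation F G V'} (h : RepIso F ρ τ) : RepIso F τ ρ := by
  obtain ⟨e, he⟩ := h
  exact ⟨e.symm, fun g w => e.symm_apply_eq.2 (by rw [he, e.apply_symm_apply])⟩

theorem IsIrreducibleRep.of_repIso {ρ : Representation F G V} {τ : Representation F G V'}
    (hρ : IsIrreducibleRep F ρ) (h : RepIso F ρ τ) : IsIrreducibleRep F τ := by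
  obtain ⟨e, he⟩ := h
  have := hρ.1
  refine ⟨e.toEquiv.symm.nontrivial, fun p hp => ?_⟩
  have hcomap : ∀ (g : G), ∀ v ∈ p.comap e.toLinearMap, ρ g v ∈ p.comap e.toLinearMap :=
    fun g v hv => by simpa [he] using hp g _ hv
  rw [← Submodule.map_comap_eq_of_surjective e.surjective p]
  rcases hρ.2 _ hcomap with h | h <;> rw [h]
  · exact Or.inl (Submodule.map_bot _)
  · exact Or.inr (by simp)

/-- A proper invariant `P < U` gives the invariant subspace `P ⊗ W`, proper by right exactness
of `⊗ W`. -/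
theorem IsIrreducibleRep.of_tprod [Nontrivial W] {ρU : Representation F G U}
    {ρW : Representation F G W} (h : IsIrreducibleRep F (ρU.tprod ρW)) :
    IsIrreducibleRep F ρU := by
  obtain ⟨w₀, hw₀⟩ := exists_ne (0 : W)
  have := h.1
  refine ⟨(subsingleton_or_nontrivial U).resolve_left fun _ =>
    not_subsingleton (U ⊗[F] W) inferInstance, fun P hP => ?_⟩
  have hrange : ∀ g : G, ∀ z ∈ LinearMap.range (P.subtype.rTensor W),
      ρU.tprod ρW g z ∈ LinearMap.range (P.subtype.rTensor W) := by
    rintro g _ ⟨z, rfl⟩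
    induction z using TensorProduct.induction_on with
    | zero => simp
    | tmul u w => exact ⟨⟨ρU g u, hP g u u.2⟩ ⊗ₜ ρW g w, by simp⟩
    | add x y hx hy => rw [map_add, map_add]; exact add_mem hx hy
  rcases h.2 _ hrange with hbot | htop
  · refine Or.inl (eq_bot_iff.2 fun u hu => ?_)
    have : u ⊗ₜ[F] w₀ ∈ LinearMap.range (P.subtype.rTensor W) := ⟨⟨u, hu⟩ ⊗ₜ w₀, rfl⟩
    rw [hbot, Submodule.mem_bot, ← TensorProduct.zero_tmul U w₀] at this
    exact TensorProduct.tmul_left_injective (F := F) hw₀ this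
  · refine Or.inr (eq_top_iff.2 fun u _ => ?_)
    have hexact := rTensor_exact W (LinearMap.exact_subtype_mkQ P) P.mkQ_surjective
    have : P.mkQ u ⊗ₜ[F] w₀ = 0 := (hexact (u ⊗ₜ w₀)).2
      (LinearMap.range_eq_top.1 htop _)
    rw [← TensorProduct.zero_tmul _ w₀] at this
    exact (Submodule.Quotient.mk_eq_zero P).1 (TensorProduct.tmul_left_injective (F := F) hw₀ this)

theorem LiesOver.exists_injective_intertwining {ρ : Representation F G V}
    {σ : Representation F G W} (h : LiesOver F ρ σ) :
    ∃ φ : W →ₗ[F] V, Function.Injective φ ∧ ∀ (g : G) (w : W), φ (σ g w) = ρ g (φ w) := by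
  obtain ⟨q, hq, e, he⟩ := h
  refine ⟨q.subtype ∘ₗ e.symm.toLinearMap, q.injective_subtype.comp e.symm.injective,
    fun g w => ?_⟩
  have : e.symm (σ g w) = subRep F ρ q hq g (e.symm w) :=
    e.symm_apply_eq.2 (by rw [he, e.apply_symm_apply])
  simp only [LinearMap.comp_apply, LinearEquiv.coe_coe, this]
  rfl

end Irreducible

section Gallagher

variable {F : Type*} [Field F] {G : Type*} [Group G] {N : Subgroup G} {U U₁ U₂ V W : Type*}
  [AddCommGroup U] [Module F U] [AddCommGroup U₁] [Module F U₁] [AddCommGroup U₂] [Module F U₂]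
  [AddCommGroup V] [Module F V] [AddCommGroup W] [Module F W] {ρW : Representation F G W}

theorem tprod_apply_eq_lTensor {ρU : Representation F G U} {g : G} (hg : ∀ u, ρU g u = u) :
    ρU.tprod ρW g = (ρW g).lTensor U :=
  TensorProduct.ext' fun u w => by simp [hg]

theorem isIrreducibleRep_tprod (hσ : IsIrreducibleRep F (ρW.comp N.subtype))
    (hEnd : HasScalarEndomorphisms (ρW.comp N.subtype)) {ρU : Representation F G U}
    (hU : IsIrreducibleRep F ρU) (hUN : ∀ (n : N) (u : U), ρU n u = u) :
    IsIrreducibleRep F (ρU.tprod ρW) := by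
  have := hU.1
  have := hσ.1
  refine ⟨inferInstance, fun p hp => (eq_or_ne p ⊥).imp id fun hp₀ => ?_⟩
  obtain ⟨u, hu, hup⟩ := exists_ne_zero_forall_tmul_mem hσ hEnd
    (fun n z hz => by simpa [tprod_apply_eq_lTensor (hUN n)] using hp n z hz) hp₀
  let U₀ : Submodule F U := ⨅ w : W, p.comap ((TensorProduct.mk F U W).flip w)
  have hmem : ∀ u, u ∈ U₀ ↔ ∀ w, u ⊗ₜ w ∈ p := by simp [U₀, Submodule.mem_iInf]
  have hU₀ : ∀ g, ∀ u ∈ U₀, ρU g u ∈ U₀ := fun g u hu => (hmem _).2 fun w => by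
    simpa using hp g _ ((hmem u).1 hu (ρW g⁻¹ w))
  rcases hU.2 U₀ hU₀ with h | h
  · exact absurd ((hmem u).2 hup) (by simpa [h] using hu)
  · rw [eq_top_iff, ← TensorProduct.span_tmul_eq_top, Submodule.span_le]
    rintro _ ⟨u', w', rfl⟩
    exact (hmem u').1 (h ▸ trivial) w'

theorem repIso_of_repIso_tprod [Nontrivial W] (hEnd : HasScalarEndomorphisms (ρW.comp N.subtype))
    {ρ₁ : Representation F G U₁} {ρ₂ : Representation F G U₂}
    (h₁ : ∀ (n : N) (u : U₁), ρ₁ n u = u) (h₂ : ∀ (n : N) (u : U₂), ρ₂ n u = u)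
    (h : RepIso F (ρ₁.tprod ρW) (ρ₂.tprod ρW)) : RepIso F ρ₁ ρ₂ := by
  obtain ⟨e, he⟩ := h
  have he' : ∀ g z, e.symm (ρ₂.tprod ρW g z) = ρ₁.tprod ρW g (e.symm z) := fun g z =>
    e.symm_apply_eq.2 (by rw [he, e.apply_symm_apply])
  obtain ⟨θ, hθ⟩ := exists_eq_rTensor_of_intertwining hEnd e.toLinearMap fun n z => by
    simpa [tprod_apply_eq_lTensor (h₁ n), tprod_apply_eq_lTensor (h₂ n)] using he n z
  obtain ⟨θ', hθ'⟩ := exists_eq_rTensor_of_intertwining hEnd e.symm.toLinearMap fun n z => by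
    simpa [tprod_apply_eq_lTensor (h₁ n), tprod_apply_eq_lTensor (h₂ n)] using he' n z
  have hθ'θ : θ' ∘ₗ θ = LinearMap.id := LinearMap.rTensor_left_injective (W := W) <| by
    simp [LinearMap.rTensor_comp, ← hθ, ← hθ']
  have hθθ' : θ ∘ₗ θ' = LinearMap.id := LinearMap.rTensor_left_injective (W := W) <| by
    simp [LinearMap.rTensor_comp, ← hθ, ← hθ']
  have hθ_apply : ∀ z, e z = θ.rTensor W z := LinearMap.congr_fun hθ
  obtain ⟨w, hw⟩ := exists_ne (0 : W)
  refine ⟨LinearEquiv.ofLinearMap θ θ' hθθ' hθ'θ, fun g u =>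
    TensorProduct.tmul_left_injective (F := F) hw ?_⟩
  calc θ (ρ₁ g u) ⊗ₜ[F] w = e (ρ₁.tprod ρW g (u ⊗ₜ ρW g⁻¹ w)) := by simp [hθ_apply]
    _ = ρ₂.tprod ρW g (e (u ⊗ₜ ρW g⁻¹ w)) := he g _
    _ = ρ₂ g (θ u) ⊗ₜ[F] w := by simp [hθ_apply]

/-- `(ρW.linHom ρV).toInvariants N` is `Hom_{FN}(W, V)`. Evaluation `Hom_{FN}(W, V) ⊗ W → V` is
injective, and onto since `V` is irreducible and lies over `W`. -/
theorem isIrreducibleRep_toInvariants_and_repIso_tprod [N.Normal]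
    (hσ : IsIrreducibleRep F (ρW.comp N.subtype))
    (hEnd : HasScalarEndomorphisms (ρW.comp N.subtype)) {ρV : Representation F G V}
    (hV : IsIrreducibleRep F ρV) (hlies : LiesOver F (ρV.comp N.subtype) (ρW.comp N.subtype)) :
    IsIrreducibleRep F ((ρW.linHom ρV).toInvariants N) ∧
      RepIso F ρV (((ρW.linHom ρV).toInvariants N).tprod ρW) := by
  have := hσ.1
  let U := Representation.invariants ((ρW.linHom ρV).comp N.subtype)
  have mem_U : ∀ φ : W →ₗ[F] V, φ ∈ U ↔
      ∀ (n : N) (w : W), φ ((ρW.comp N.subtype) n w) = (ρV.comp N.subtype) n (φ w) := by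
    intro φ
    simp only [U, Representation.mem_invariants, MonoidHom.comp_apply, Subgroup.coe_subtype,
      Representation.linHom_apply]
    refine ⟨fun h n w => ?_, fun h n => LinearMap.ext fun w => ?_⟩
    · conv_lhs => rw [← h n]
      simp
    · simp [← h]
  let ev := TensorProduct.lift U.subtype
  have hev : ∀ (g : G) (z : U ⊗[F] W),
      ev ((ρW.linHom ρV).toInvariants N |>.tprod ρW g z) = ρV g (ev z) := by
    intro g z
    induction z using TensorProduct.induction_on with
    | zero => simp
    | tmul φ w => simp [ev]
    | add x y hx hy => simp only [map_add, hx, hy]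
  obtain ⟨φ₀, hφ₀, hφ₀N⟩ := hlies.exists_injective_intertwining
  obtain ⟨w₀, hw₀⟩ := exists_ne (0 : W)
  have hsurj : Function.Surjective ev := by
    have hrange : ∀ g : G, ∀ v ∈ LinearMap.range ev, ρV g v ∈ LinearMap.range ev := by
      rintro g _ ⟨z, rfl⟩
      exact ⟨_, hev g z⟩
    refine LinearMap.range_eq_top.1 ((hV.2 _ hrange).resolve_left fun h => hw₀ (hφ₀ ?_))
    have : φ₀ w₀ ∈ LinearMap.range ev := ⟨⟨φ₀, (mem_U φ₀).2 hφ₀N⟩ ⊗ₜ w₀, by simp [ev]⟩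
    rw [h, Submodule.mem_bot] at this
    rw [this, map_zero]
  have hiso : RepIso F ((ρW.linHom ρV).toInvariants N |>.tprod ρW) ρV :=
    ⟨.ofBijective ev ⟨injective_lift_subtype_of_intertwining hσ hEnd
      (fun φ hφ => (mem_U φ).1 hφ), hsurj⟩, hev⟩
  exact ⟨(hV.of_repIso hiso.symm).of_tprod, hiso.symm⟩

end Gallagher

universe u

/-- Theorem 3.10 (Gallagher): let `N ⊴ G` and let `R : N → GL(W)` be an irreducible
representation with `End_{FN}(W) = F` which extends to a representation `S : G → GL(W)`.
Then (a) every irreducible `FG`-module lying over `W` is isomorphic to `U ⊗_F W` for some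
irreducible `FG`-module `U` with trivial `N`-action, (b) for every such `U` the module
`U ⊗_F W` is irreducible, and (c) `U₁ ⊗_F W ≅ U₂ ⊗_F W` implies `U₁ ≅ U₂`. -/
theorem gallagher
    (F : Type*) [Field F] {G : Type*} [Group G] (N : Subgroup G) (hN : N.Normal)
    (W : Type u) [AddCommGroup W] [Module F W] (σ : Representation F ↥N W)
    (hσ : IsIrreducibleRep F σ)
    (hEnd : ∀ f : W →ₗ[F] W,
      (∀ (n : ↥N) (w : W), f (σ n w) = σ n (f w)) → ∃ c : F, ∀ w : W, f w = c • w)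
    (ρW : Representation F G W) (hext : ∀ n : ↥N, ρW (n : G) = σ n) :
    -- (a)
    (∀ (V : Type u) (_ : AddCommGroup V) (_ : Module F V) (ρV : Representation F G V),
      IsIrreducibleRep F ρV → LiesOver F (ρV.comp N.subtype) σ →
        ∃ (U : Type u) (_ : AddCommGroup U) (_ : Module F U)
          (ρU : Representation F G U),
          IsIrreducibleRep F ρU ∧ (∀ (n : ↥N) (u : U), ρU (n : G) u = u) ∧
            RepIso F ρV (ρU.tprod ρW)) ∧
    -- (b)
    (∀ (U : Type u) (_ : AddCommGroup U) (_ : Module F U) (ρU : Representation F G U),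
      IsIrreducibleRep F ρU → (∀ (n : ↥N) (u : U), ρU (n : G) u = u) →
        IsIrreducibleRep F (ρU.tprod ρW)) ∧
    -- (c)
    (∀ (U₁ : Type u) (_ : AddCommGroup U₁) (_ : Module F U₁)
        (U₂ : Type u) (_ : AddCommGroup U₂) (_ : Module F U₂)
        (ρ₁ : Representation F G U₁) (ρ₂ : Representation F G U₂),
      IsIrreducibleRep F ρ₁ → (∀ (n : ↥N) (u : U₁), ρ₁ (n : G) u = u) →
      IsIrreducibleRep F ρ₂ → (∀ (n : ↥N) (u : U₂), ρ₂ (n : G) u = u) →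
      RepIso F (ρ₁.tprod ρW) (ρ₂.tprod ρW) → RepIso F ρ₁ ρ₂) := by
  obtain rfl : σ = ρW.comp N.subtype := MonoidHom.ext fun n => (hext n).symm
  have := hσ.1
  refine ⟨fun V _ _ ρV hV hlies => ?_, fun U _ _ ρU hU hUN => isIrreducibleRep_tprod hσ hEnd hU hUN,
    fun U₁ _ _ U₂ _ _ ρ₁ ρ₂ _ h₁ _ h₂ h => repIso_of_repIso_tprod hEnd h₁ h₂ h⟩
  have := hN
  obtain ⟨hU, hiso⟩ := isIrreducibleRep_toInvariants_and_repIso_tprod hσ hEnd hV hlies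
  exact ⟨_, _, _, _, hU, fun n =>
    Representation.isTrivial_apply (((ρW.linHom ρV).toInvariants N).comp N.subtype) n, hiso⟩
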